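/- For every t ∈ ℝ and every λ ∈ ℂ, one has det(λI − φ⁺(t)) = 0 if and only if det(λ M_{−∞} − M_t) = 0, where M_t = ∫_t^∞ e^{−s²} S(s)[S(s)]^T ds and M_{−∞} = ∫_{−∞}^{∞} e^{−s²} S(s)[S(s)]^T ds with S(s) = (1, s, …, s^{n−1})^T. -/

import Mathlib

open MeasureTheory Filter Topology

noncomputable section

/-- The physicists' Hermite polynomial `H_m(y) = (−1)^m e^{y²} (d/dy)^m e^{−y²}`. -/
def hermiteH (m : ℕ) (y : ℝ) : ℝ :=
  (-1 : ℝ) ^ m * Real.exp (y ^ 2) * iteratedDeriv m (fun x => Real.exp (-x ^ 2)) y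

/-- The Hermite function `h_m(y) = (2^m m! √π)^{−1/2} H_m(y) e^{−y²/2}`. -/
def hermiteFun (m : ℕ) (y : ℝ) : ℝ :=
  (Real.sqrt (2 ^ m * m.factorial * Real.sqrt Real.pi))⁻¹ * hermiteH m y *
    Real.exp (-y ^ 2 / 2)

/-- The matrix `H(y)[H(y)]ᵀ`, where `H(y) = (h_0(y), …, h_{n−1}(y))ᵀ`. -/
def HHT (n : ℕ) (y : ℝ) : Matrix (Fin n) (Fin n) ℝ :=
  Matrix.of fun j k : Fin n => hermiteFun j y * hermiteFun k y


/-- `φ⁺(t) = ∫_t^∞ H(s)[H(s)]ᵀ ds`. -/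
def phiPlus (n : ℕ) (t : ℝ) : Matrix (Fin n) (Fin n) ℝ :=
  Matrix.of fun j k : Fin n => ∫ s in Set.Ioi t, hermiteFun j s * hermiteFun k s

/-- `M_t = ∫_t^∞ e^{−s²} S(s)[S(s)]ᵀ ds` with `S(s) = (1, s, …, s^{n−1})ᵀ`. -/
def Mmat (n : ℕ) (t : ℝ) : Matrix (Fin n) (Fin n) ℝ :=
  Matrix.of fun j k : Fin n =>
    ∫ s in Set.Ioi t, Real.exp (-s ^ 2) * (s ^ (j : ℕ) * s ^ (k : ℕ))

/-- `M_{−∞} = ∫_ℝ e^{−s²} S(s)[S(s)]ᵀ ds`. -/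
def MmatBot (n : ℕ) : Matrix (Fin n) (Fin n) ℝ :=
  Matrix.of fun j k : Fin n => ∫ s : ℝ, Real.exp (-s ^ 2) * (s ^ (j : ℕ) * s ^ (k : ℕ))

/-!
Write `h_m(s) = q_m(s) e^{-s²/2}`, where `q_m` is the normalized Hermite polynomial, of degree
`m` with nonzero leading coefficient. Then `H(s) = e^{-s²/2} B S(s)` for the lower-triangular
coefficient matrix `B` of `q_0, …, q_{n-1}`, so `φ⁺(t) = B M_t Bᵀ`, while orthonormality of the
Hermite functions (Rodrigues' formula and repeated integration by parts against `e^{-s²}`)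
says `B M_{−∞} Bᵀ = I`. Hence `λI − φ⁺(t) = B (λM_{−∞} − M_t) Bᵀ`, and `det B ≠ 0`.
-/

open Polynomial Real Matrix

lemma eval_eq_sum_fin {R : Type*} [Semiring R] {p : R[X]} {n : ℕ} (hp : p.natDegree < n)
    (x : R) : p.eval x = ∑ k : Fin n, p.coeff k * x ^ (k : ℕ) := by
  rw [eval_eq_sum_range' hp, Fin.sum_univ_eq_sum_range (fun k => p.coeff k * x ^ k)]

lemma iterate_derivative_eq_C_of_natDegree_le {R : Type*} [Semiring R] {p : R[X]} {k : ℕ}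
    (hp : p.natDegree ≤ k) : derivative^[k] p = C (k.factorial • p.coeff k) := by
  rw [eq_C_of_natDegree_le_zero ((natDegree_iterate_derivative p k).trans (by omega)),
    coeff_iterate_derivative, zero_add, Nat.descFactorial_self]

lemma integral_mul_mul_apply {α 𝕜 l m n o : Type*} [MeasurableSpace α] [RCLike 𝕜]
    [Fintype m] [Fintype n] {μ : Measure α} (A : Matrix l m 𝕜) {F : α → Matrix m n 𝕜}
    (B : Matrix n o 𝕜) (hF : ∀ a b, Integrable (fun x => F x a b) μ) (i : l) (j : o) :
    ∫ x, (A * F x * B) i j ∂μ = (A * Matrix.of (fun a b => ∫ x, F x a b ∂μ) * B) i j := by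
  simp only [Matrix.mul_apply, Matrix.of_apply]
  rw [integral_finsetSum _ fun b _ => ?_]
  · refine Finset.sum_congr rfl fun b _ => ?_
    rw [integral_mul_const, integral_finsetSum _ fun a _ => (hF a b).const_mul _]
    simp only [integral_const_mul, Finset.sum_mul]
  · exact (integrable_finsetSum _ fun a _ => (hF a b).const_mul _).mul_const _

lemma det_smul_one_sub_eq_zero_iff {R n : Type*} [CommRing R] [Fintype n] [DecidableEq n]
    {A M₀ : Matrix n n R} (hA : IsUnit A.det) (h₀ : A * M₀ * Aᵀ = 1) (c : R)
    (M₁ : Matrix n n R) :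
    (c • 1 - A * M₁ * Aᵀ).det = 0 ↔ (c • M₀ - M₁).det = 0 := by
  rw [← h₀, ← Matrix.smul_mul, ← Matrix.mul_smul, ← Matrix.sub_mul, ← Matrix.mul_sub,
    Matrix.det_mul, Matrix.det_mul, Matrix.det_transpose, hA.mul_left_eq_zero, hA.mul_right_eq_zero]

/-- `H_m(x) = 2^{m/2} He_m(√2 x)`, with `He_m` Mathlib's probabilists' Hermite polynomial. -/
def physHermite (m : ℕ) : ℝ[X] :=
  C (√2 ^ m) * ((hermite m).map (Int.castRingHom ℝ)).comp (C √2 * X)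

lemma eval_physHermite (m : ℕ) (x : ℝ) :
    (physHermite m).eval x = √2 ^ m * aeval (√2 * x) (hermite m) := by
  simp [physHermite, eval_map, aeval_def, algebraMap_int_eq]

lemma natDegree_physHermite_le (m : ℕ) : (physHermite m).natDegree ≤ m := by
  refine (natDegree_C_mul_le _ _).trans (natDegree_comp_le.trans ?_)
  rw [(hermite_monic m).natDegree_map, natDegree_hermite, natDegree_C_mul_X _ (by positivity),
    mul_one]

lemma coeff_physHermite_self (m : ℕ) : (physHermite m).coeff m = 2 ^ m := by
  set q := ((hermite m).map (Int.castRingHom ℝ)).comp (C √2 * X)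
  have hX : (C √2 * X).natDegree = 1 := natDegree_C_mul_X _ (by positivity)
  have hmap : ((hermite m).map (Int.castRingHom ℝ)).natDegree = m := by
    rw [(hermite_monic m).natDegree_map, natDegree_hermite]
  have hq : q.coeff m = √2 ^ m := by
    have hdeg : q.natDegree = m := by rw [natDegree_comp, hX, hmap, mul_one]
    rw [← hdeg, coeff_natDegree, leadingCoeff_comp (by rw [hX]; simp),
      ((hermite_monic m).map _).leadingCoeff, leadingCoeff_C_mul_X, hmap, one_mul, hdeg]
  rw [physHermite, coeff_C_mul, hq, ← mul_pow, Real.mul_self_sqrt zero_le_two]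

lemma iteratedDeriv_exp_neg_sq (m : ℕ) (x : ℝ) :
    iteratedDeriv m (fun x => exp (-x ^ 2)) x =
      (-1) ^ m * (physHermite m).eval x * exp (-x ^ 2) := by
  have hscale : (fun x : ℝ => exp (-x ^ 2)) = fun x => exp (-((√2 * x) ^ 2 / 2)) := by
    funext x; rw [mul_pow, Real.sq_sqrt zero_le_two]; ring_nf
  rw [hscale, iteratedDeriv_comp_const_mul (f := fun u => exp (-(u ^ 2 / 2))) (by fun_prop) √2,
    iteratedDeriv_eq_iterate]
  beta_reduce
  rw [deriv_gaussian_eq_hermite_mul_gaussian, eval_physHermite, mul_pow,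
    Real.sq_sqrt zero_le_two]
  ring_nf

lemma hermiteH_eq_eval_physHermite (m : ℕ) (y : ℝ) : hermiteH m y = (physHermite m).eval y := by
  have hexp : exp (y ^ 2) * exp (-y ^ 2) = 1 := by rw [← exp_add, add_neg_cancel, exp_zero]
  have hsign : ((-1 : ℝ) ^ m) ^ 2 = 1 := by rw [← pow_mul, pow_mul', neg_one_sq, one_pow]
  rw [hermiteH, iteratedDeriv_exp_neg_sq]
  linear_combination
    (physHermite m).eval y * ((-1) ^ m) ^ 2 * hexp + (physHermite m).eval y * hsign

lemma integrable_eval_mul_exp_neg_sq (p : ℝ[X]) :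
    Integrable fun x => p.eval x * exp (-x ^ 2) := by
  induction p using Polynomial.induction_on' with
  | add p q hp hq => simp only [eval_add, add_mul]; exact hp.add hq
  | monomial k a =>
    have := integrable_rpow_mul_exp_neg_mul_sq one_pos (s := k)
      (neg_one_lt_zero.trans_le k.cast_nonneg)
    simpa [mul_assoc] using this.const_mul a

lemma integrable_eval_mul_iteratedDeriv_exp_neg_sq (p : ℝ[X]) (m : ℕ) :
    Integrable fun x => p.eval x * iteratedDeriv m (fun x => exp (-x ^ 2)) x :=
  (integrable_eval_mul_exp_neg_sq (C ((-1) ^ m) * p * physHermite m)).congr <|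
    .of_forall fun x => by simp only [eval_mul, eval_C, iteratedDeriv_exp_neg_sq]; ring

lemma integral_eval_mul_iteratedDeriv_exp_neg_sq (p : ℝ[X]) (m : ℕ) :
    ∫ x, p.eval x * iteratedDeriv m (fun x => exp (-x ^ 2)) x =
      (-1) ^ m * ∫ x, (derivative^[m] p).eval x * exp (-x ^ 2) := by
  induction m generalizing p with
  | zero => simp
  | succ m ih =>
    have hderiv (x : ℝ) : HasDerivAt (iteratedDeriv m (fun x => exp (-x ^ 2)))
        (iteratedDeriv (m + 1) (fun x => exp (-x ^ 2)) x) x := by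
      rw [iteratedDeriv_succ]
      have hg : ContDiff ℝ ⊤ fun x : ℝ => exp (-x ^ 2) := by fun_prop
      exact (hg.differentiable_iteratedDeriv m (by simp) x).hasDerivAt
    rw [integral_mul_deriv_eq_deriv_mul_of_integrable (fun x _ => p.hasDerivAt x)
      (fun x _ => hderiv x)
      (integrable_eval_mul_iteratedDeriv_exp_neg_sq p (m + 1))
      (integrable_eval_mul_iteratedDeriv_exp_neg_sq (derivative p) m)
      (integrable_eval_mul_iteratedDeriv_exp_neg_sq p m), ih, Function.iterate_succ_apply]
    ring

lemma integral_eval_mul_physHermite_mul_exp_neg_sq (p : ℝ[X]) (k : ℕ) :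
    ∫ x, p.eval x * (physHermite k).eval x * exp (-x ^ 2) =
      ∫ x, (derivative^[k] p).eval x * exp (-x ^ 2) := by
  have hsign : ((-1 : ℝ) ^ k) ^ 2 = 1 := by rw [← pow_mul, pow_mul', neg_one_sq, one_pow]
  have h (x : ℝ) : p.eval x * (physHermite k).eval x * exp (-x ^ 2) =
      (-1) ^ k * (p.eval x * iteratedDeriv k (fun x => exp (-x ^ 2)) x) := by
    rw [iteratedDeriv_exp_neg_sq]
    linear_combination (-p.eval x * (physHermite k).eval x * exp (-x ^ 2)) * hsign
  simp_rw [h, integral_const_mul, integral_eval_mul_iteratedDeriv_exp_neg_sq, ← mul_assoc, ← sq,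
    hsign, one_mul]

lemma integral_physHermite_mul_physHermite_of_le {j k : ℕ} (h : j ≤ k) :
    ∫ x, (physHermite j).eval x * (physHermite k).eval x * exp (-x ^ 2) =
      if j = k then 2 ^ k * k.factorial * √π else 0 := by
  rw [integral_eval_mul_physHermite_mul_exp_neg_sq]
  obtain rfl | hlt := h.eq_or_lt
  · rw [iterate_derivative_eq_C_of_natDegree_le (natDegree_physHermite_le j),
      coeff_physHermite_self]
    have hgauss : ∫ x : ℝ, exp (-x ^ 2) = √π := by simpa using integral_gaussian 1
    rw [if_pos rfl]
    simp only [eval_C, integral_const_mul, hgauss, nsmul_eq_mul]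
    ring
  · rw [iterate_derivative_eq_zero ((natDegree_physHermite_le j).trans_lt hlt), if_neg hlt.ne]
    simp

lemma integral_physHermite_mul_physHermite (j k : ℕ) :
    ∫ x, (physHermite j).eval x * (physHermite k).eval x * exp (-x ^ 2) =
      if j = k then 2 ^ k * k.factorial * √π else 0 := by
  rcases le_total j k with h | h
  · exact integral_physHermite_mul_physHermite_of_le h
  · simp_rw [mul_comm ((physHermite j).eval _), integral_physHermite_mul_physHermite_of_le h,
      eq_comm (a := k)]
    split_ifs with hjk <;> simp [hjk]

def normalizedPhysHermite (m : ℕ) : ℝ[X] :=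
  C (√(2 ^ m * m.factorial * √π))⁻¹ * physHermite m

lemma natDegree_normalizedPhysHermite_le (m : ℕ) : (normalizedPhysHermite m).natDegree ≤ m :=
  (natDegree_C_mul_le _ _).trans (natDegree_physHermite_le m)

lemma coeff_normalizedPhysHermite_self_ne_zero (m : ℕ) :
    (normalizedPhysHermite m).coeff m ≠ 0 := by
  rw [normalizedPhysHermite, coeff_C_mul, coeff_physHermite_self]
  positivity

lemma hermiteFun_mul_hermiteFun (j k : ℕ) (y : ℝ) :
    hermiteFun j y * hermiteFun k y =
      (normalizedPhysHermite j).eval y * (normalizedPhysHermite k).eval y * exp (-y ^ 2) := by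
  have hexp : exp (-y ^ 2 / 2) * exp (-y ^ 2 / 2) = exp (-y ^ 2) := by rw [← exp_add]; ring_nf
  simp only [hermiteFun, hermiteH_eq_eval_physHermite, normalizedPhysHermite, eval_mul, eval_C]
  linear_combination (√(2 ^ j * j.factorial * √π))⁻¹ * (physHermite j).eval y *
    (√(2 ^ k * k.factorial * √π))⁻¹ * (physHermite k).eval y * hexp

lemma integral_hermiteFun_mul_hermiteFun (j k : ℕ) :
    ∫ y, hermiteFun j y * hermiteFun k y = if j = k then 1 else 0 := by
  set c := fun m : ℕ => (√(2 ^ m * m.factorial * √π))⁻¹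
  have h (y : ℝ) :
      (normalizedPhysHermite j).eval y * (normalizedPhysHermite k).eval y * exp (-y ^ 2) =
        c j * c k * ((physHermite j).eval y * (physHermite k).eval y * exp (-y ^ 2)) := by
    simp only [normalizedPhysHermite, eval_mul, eval_C, c]; ring
  simp_rw [hermiteFun_mul_hermiteFun, h, integral_const_mul, integral_physHermite_mul_physHermite]
  split_ifs with hjk
  · subst hjk
    have hN : 0 < 2 ^ j * (j.factorial : ℝ) * √π := by positivity
    simp only [c, ← mul_inv, Real.mul_self_sqrt hN.le, inv_mul_cancel₀ hN.ne']
  · rw [mul_zero]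

/-- `e^{−s²} S(s)[S(s)]ᵀ`: `Mmat` and `MmatBot` are its entrywise integrals. -/
def gaussMonomialMatrix (n : ℕ) (s : ℝ) : Matrix (Fin n) (Fin n) ℝ :=
  Matrix.of fun j k : Fin n => exp (-s ^ 2) * (s ^ (j : ℕ) * s ^ (k : ℕ))

lemma integrable_gaussMonomialMatrix_apply {n : ℕ} (j k : Fin n) :
    Integrable fun s => gaussMonomialMatrix n s j k :=
  (integrable_eval_mul_exp_neg_sq (X ^ (j : ℕ) * X ^ (k : ℕ))).congr <|
    .of_forall fun s => by simp [gaussMonomialMatrix, mul_comm]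

def hermiteCoeffMatrix (n : ℕ) : Matrix (Fin n) (Fin n) ℝ :=
  Matrix.of fun j k : Fin n => (normalizedPhysHermite j).coeff k

lemma hermiteFun_mul_hermiteFun_eq_mul_apply {n : ℕ} (j k : Fin n) (s : ℝ) :
    hermiteFun j s * hermiteFun k s =
      (hermiteCoeffMatrix n * gaussMonomialMatrix n s * (hermiteCoeffMatrix n)ᵀ) j k := by
  have hdeg (j : Fin n) : (normalizedPhysHermite j).natDegree < n :=
    (natDegree_normalizedPhysHermite_le j).trans_lt j.isLt
  rw [hermiteFun_mul_hermiteFun, eval_eq_sum_fin (hdeg j), eval_eq_sum_fin (hdeg k)]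
  simp only [Matrix.mul_apply, Matrix.transpose_apply, hermiteCoeffMatrix, gaussMonomialMatrix,
    Matrix.of_apply, Finset.sum_mul, Finset.mul_sum]
  refine Finset.sum_congr rfl fun a _ => Finset.sum_congr rfl fun b _ => ?_
  ring

lemma phiPlus_eq_mul_Mmat_mul_transpose (n : ℕ) (t : ℝ) :
    phiPlus n t = hermiteCoeffMatrix n * Mmat n t * (hermiteCoeffMatrix n)ᵀ := by
  ext j k
  simp only [phiPlus, Matrix.of_apply, hermiteFun_mul_hermiteFun_eq_mul_apply]
  exact integral_mul_mul_apply _ _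
    (fun a b => (integrable_gaussMonomialMatrix_apply a b).integrableOn) j k

lemma hermiteCoeffMatrix_mul_MmatBot_mul_transpose (n : ℕ) :
    hermiteCoeffMatrix n * MmatBot n * (hermiteCoeffMatrix n)ᵀ = 1 := by
  ext j k
  rw [show MmatBot n = Matrix.of fun a b => ∫ s, gaussMonomialMatrix n s a b from rfl,
    ← integral_mul_mul_apply _ _ integrable_gaussMonomialMatrix_apply]
  simp_rw [← hermiteFun_mul_hermiteFun_eq_mul_apply, integral_hermiteFun_mul_hermiteFun,
    Fin.val_inj, Matrix.one_apply]

lemma det_hermiteCoeffMatrix_ne_zero (n : ℕ) : (hermiteCoeffMatrix n).det ≠ 0 := by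
  have hlower : (hermiteCoeffMatrix n).IsLowerTriangular := fun j k hjk =>
    coeff_eq_zero_of_natDegree_lt ((natDegree_normalizedPhysHermite_le j).trans_lt hjk)
  rw [det_of_isLowerTriangular _ hlower]
  exact Finset.prod_ne_zero_iff.2 fun j _ => coeff_normalizedPhysHermite_self_ne_zero j

theorem phiPlus_charpoly_iff_general (n : ℕ) (t : ℝ) (lam : ℂ) :
    (lam • (1 : Matrix (Fin n) (Fin n) ℂ) -
        (phiPlus n t).map (fun x : ℝ => (x : ℂ))).det = 0 ↔
      (lam • (MmatBot n).map (fun x : ℝ => (x : ℂ)) -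
        (Mmat n t).map (fun x : ℝ => (x : ℂ))).det = 0 := by
  set B := (hermiteCoeffMatrix n).map Complex.ofRealHom
  have hB : IsUnit B.det := by
    rw [show B.det = Complex.ofRealHom (hermiteCoeffMatrix n).det from (RingHom.map_det _ _).symm]
    exact (det_hermiteCoeffMatrix_ne_zero n).isUnit.map _
  have h₀ : B * (MmatBot n).map Complex.ofRealHom * Bᵀ = 1 := by
    rw [← Matrix.transpose_map, ← Matrix.map_mul, ← Matrix.map_mul,
      hermiteCoeffMatrix_mul_MmatBot_mul_transpose, Matrix.map_one _ (map_zero _) (map_one _)]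
  have hφ : (phiPlus n t).map Complex.ofRealHom = B * (Mmat n t).map Complex.ofRealHom * Bᵀ := by
    rw [phiPlus_eq_mul_Mmat_mul_transpose, Matrix.map_mul, Matrix.map_mul, Matrix.transpose_map]
  exact hφ ▸ det_smul_one_sub_eq_zero_iff hB h₀ lam _

/-- For every `t ∈ ℝ` and `λ ∈ ℂ`, `det(λI − φ⁺(t)) = 0` iff
`det(λ M_{−∞} − M_t) = 0`. -/
theorem phiPlus_charpoly_iff (n : ℕ) (hn : 1 ≤ n) (t : ℝ) (lam : ℂ) :
    (lam • (1 : Matrix (Fin n) (Fin n) ℂ) -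
        (phiPlus n t).map (fun x : ℝ => (x : ℂ))).det = 0 ↔
      (lam • (MmatBot n).map (fun x : ℝ => (x : ℂ)) -
        (Mmat n t).map (fun x : ℝ => (x : ℂ))).det = 0 :=
  phiPlus_charpoly_iff_general n t lam
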